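/- arXiv:1312.6081 — 6 statements merged into one kernel-verified Lean document; each statement's English description precedes it below -/
import Mathlib

section
/- Let K ⊆ ℝ be a set containing ℚ such that the complement ℝ \ K meets no Cantor set, i.e., K intersects every copy of the Cantor set in ℝ. If G ⊆ ℝ is a Gδ set with K ⊆ G, then ℝ \ G is countable. -/
open Set

theorem IsClosed.exists_subset_homeomorph_cantor_of_not_countable {α : Type*}
    [TopologicalSpace α] [PolishSpace α] {C : Set α} (hC : IsClosed C) (hunc : ¬C.Countable) :
    ∃ D ⊆ C, Nonempty (D ≃ₜ (ℕ → Bool)) := by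
  obtain ⟨f, hfC, hf, hinj⟩ := hC.exists_nat_bool_injection_of_not_countable hunc
  exact ⟨range f, hfC, ⟨(hf.isClosedEmbedding hinj).toIsEmbedding.toHomeomorph.symm⟩⟩

theorem IsClosed.countable_of_disjoint_of_forall_cantor_inter_nonempty {α : Type*}
    [TopologicalSpace α] [PolishSpace α] {K C : Set α} (hC : IsClosed C)
    (hK : ∀ D : Set α, Nonempty (D ≃ₜ (ℕ → Bool)) → (K ∩ D).Nonempty) (hKC : Disjoint K C) :
    C.Countable := by
  by_contra hunc
  obtain ⟨D, hDC, hD⟩ := hC.exists_subset_homeomorph_cantor_of_not_countable hunc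
  obtain ⟨x, hxK, hxD⟩ := hK D hD
  exact hKC.notMem_of_mem_left hxK (hDC hxD)

theorem stmt_1_general (K G : Set ℝ)
    (hK : ∀ C : Set ℝ, Nonempty (C ≃ₜ (ℕ → Bool)) → (K ∩ C).Nonempty)
    (hG : IsGδ G) (hKG : K ⊆ G) :
    Gᶜ.Countable := by
  obtain ⟨T, hT_open, hT_countable, rfl⟩ := hG
  rw [compl_sInter]
  refine (hT_countable.image compl).sUnion ?_
  rintro _ ⟨t, ht, rfl⟩
  refine (hT_open t ht).isClosed_compl.countable_of_disjoint_of_forall_cantor_inter_nonempty hK ?_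
  exact disjoint_compl_right_iff_subset.mpr (hKG.trans (sInter_subset_of_mem ht))

/-- If `K ⊆ ℝ` contains `ℚ` and meets every copy of the Cantor set, then the
complement of any `Gδ` set containing `K` is countable. -/
theorem stmt_1 (K G : Set ℝ)
    (hQ : Set.range ((↑) : ℚ → ℝ) ⊆ K)
    (hK : ∀ C : Set ℝ, Nonempty (C ≃ₜ (ℕ → Bool)) → (K ∩ C).Nonempty)
    (hG : IsGδ G) (hKG : K ⊆ G) :
    Gᶜ.Countable :=
  stmt_1_general K G hK hG hKG
end

section
/- Let K ⊆ ℝ intersect every copy of the Cantor set in ℝ, and let (A_β)_{β ≤ α} be a family of fewer than continuum many Gδ subsets of ℝ each containing K. Then the set (ℝ \ K) ∩ ⋂_{β ≤ α} A_β has cardinality 2^ℵ₀, provided ℝ \ K has cardinality 2^ℵ₀. -/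
/-!
A closed set avoiding `K` contains no Cantor set, so by the Cantor–Bendixson theorem it is
countable. Hence every `Gδ` set containing `K` has countable complement, and fewer than continuum
many of these complements cover fewer than continuum many points of `ℝ \ K`.
-/

open Cardinal Set

universe u

def MeetsEveryCantorSet {X : Type*} [TopologicalSpace X] (K : Set X) : Prop :=
  ∀ C : Set X, Nonempty (C ≃ₜ (ℕ → Bool)) → (K ∩ C).Nonempty

namespace Cardinal

theorem mk_diff_eq_of_lt {α : Type*} {s t : Set α} (hs : ℵ₀ ≤ #s) (ht : #t < #s) :
    #(s \ t : Set α) = #s := by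
  have hsplit := mk_sdiff_add_mk (inter_subset_left : s ∩ t ⊆ s)
  rw [sdiff_self_inter, add_comm] at hsplit
  exact eq_of_add_eq_of_aleph0_le hsplit ((mk_le_mk_of_subset inter_subset_right).trans_lt ht) hs

theorem mk_iUnion_lt_of_countable {ι α : Type u} {f : ι → Set α} {c : Cardinal}
    (hι : #ι < c) (hc : ℵ₀ < c) (hf : ∀ i, (f i).Countable) : #(⋃ i, f i) < c :=
  (mk_iUnion_le f).trans_lt <|
    mul_lt_of_lt hc.le hι ((ciSup_le' fun i => (hf i).le_aleph0).trans_lt hc)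

end Cardinal

section Polish

variable {X : Type*} [TopologicalSpace X] [PolishSpace X] {K : Set X}

theorem MeetsEveryCantorSet.countable_of_isClosed (hK : MeetsEveryCantorSet K) {t : Set X}
    (ht : IsClosed t) (htK : Disjoint t K) : t.Countable := by
  by_contra hunc
  obtain ⟨f, hft, hcont, hinj⟩ := ht.exists_nat_bool_injection_of_not_countable hunc
  let e : (ℕ → Bool) ≃ₜ range f := (hcont.isClosedEmbedding hinj).toHomeomorph
  obtain ⟨x, hxK, hxf⟩ := hK (range f) ⟨e.symm⟩
  exact htK.notMem_of_mem_left (hft hxf) hxK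

theorem MeetsEveryCantorSet.countable_compl_of_isGδ (hK : MeetsEveryCantorSet K) {A : Set X}
    (hA : IsGδ A) (hKA : K ⊆ A) : Aᶜ.Countable := by
  obtain ⟨T, hTopen, hTcount, rfl⟩ := hA
  rw [compl_sInter]
  refine (hTcount.image _).sUnion ?_
  rintro _ ⟨u, hu, rfl⟩
  refine hK.countable_of_isClosed (hTopen u hu).isClosed_compl ?_
  exact disjoint_compl_left_iff_subset.mpr (hKA.trans (sInter_subset_of_mem hu))

end Polish

/-- If `K` meets every Cantor set, `ℝ \ K` has cardinality continuum, and
`(A β)` is a family of fewer than continuum many `Gδ` sets each containing `K`,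
then `(ℝ \ K) ∩ ⋂ β, A β` has cardinality continuum. -/
theorem stmt_4 {ι : Type} (K : Set ℝ) (A : ι → Set ℝ)
    (hK : ∀ C : Set ℝ, Nonempty (C ≃ₜ (ℕ → Bool)) → (K ∩ C).Nonempty)
    (hι : #ι < Cardinal.continuum)
    (hGδ : ∀ i, IsGδ (A i)) (hKA : ∀ i, K ⊆ A i)
    (hKc : #(↥Kᶜ) = Cardinal.continuum) :
    #(↥(Kᶜ ∩ ⋂ i, A i)) = Cardinal.continuum := by
  have hK' : MeetsEveryCantorSet K := hK
  have hsmall : #(⋃ i, (A i)ᶜ) < 𝔠 := mk_iUnion_lt_of_countable hι aleph0_lt_continuum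
    fun i => hK'.countable_compl_of_isGδ (hGδ i) (hKA i)
  have hdiff : Kᶜ ∩ ⋂ i, A i = Kᶜ \ ⋃ i, (A i)ᶜ := by
    simp only [sdiff_eq, compl_iUnion, compl_compl]
  rw [hdiff, ← hKc]
  exact mk_diff_eq_of_lt (hKc ▸ aleph0_le_continuum) (hKc ▸ hsmall)
end

section
/- If a topological space X is a countable union of compact metrizable subspaces, then there exists an injective Borel-measurable map from X onto a σ-compact metrizable space. -/
/-! Disjointify the cover: `D n = K n \ (K 0 ∪ ⋯ ∪ K (n - 1))`. The `K m` are compact in a Hausdorff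
space, hence closed, so `D n` is open in the compact metrizable space `K n`; it is therefore
locally compact, second countable and metrizable, hence σ-compact, and so is the disjoint union
`Σ n, D n`. The `D n` partition `X` into Borel sets, and the tautological bijection
`X → Σ n, D n` is Borel: it pulls an open set back to a countable union of relatively open
subsets of the `D n`. -/

open Set TopologicalSpace Topology

instance TopologicalSpace.MetrizableSpace.sigma {ι : Type*} {E : ι → Type*}
    [∀ i, TopologicalSpace (E i)] [∀ i, MetrizableSpace (E i)] : MetrizableSpace (Σ i, E i) :=
  letI := fun i ↦ metrizableSpaceMetric (E i)
  letI : MetricSpace (Σ i, E i) := Metric.Sigma.metricSpace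
  inferInstance

theorem IsCompact.sigmaCompactSpace_inter_of_isOpen {X : Type*} [TopologicalSpace X]
    {K U : Set X} (hK : IsCompact K) [MetrizableSpace K] (hU : IsOpen U) :
    SigmaCompactSpace ↥(K ∩ U) := by
  have := isCompact_iff_compactSpace.1 hK
  have hopen : IsOpenEmbedding (inclusion inter_subset_left : ↥(K ∩ U) → K) :=
    ⟨.inclusion _, by
      simp only [range_inclusion, mem_inter_iff, Subtype.coe_prop, true_and]
      exact hU.preimage continuous_subtype_val⟩
  have := hopen.locallyCompactSpace
  have := hopen.isEmbedding.secondCountableTopology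
  exact sigmaCompactSpace_of_locallyCompact_secondCountable

theorem existsUnique_mem_disjointed {α : Type*} {f : ℕ → Set α} (hf : ⋃ n, f n = univ) (x : α) :
    ∃! n, x ∈ disjointed f n := by
  obtain ⟨n, hn⟩ := mem_iUnion.1 (iUnion_disjointed.trans hf ▸ mem_univ x)
  exact ⟨n, hn, fun m hm ↦ (disjoint_disjointed f).eq (not_disjoint_iff.2 ⟨x, hm, hn⟩)⟩

theorem Set.measurable_sigmaEquiv_symm {ι X : Type*} [Countable ι] [TopologicalSpace X]
    [MeasurableSpace X] [OpensMeasurableSpace X] {s : ι → Set X} (hs : ∀ x, ∃! i, x ∈ s i)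
    (hmeas : ∀ i, MeasurableSet (s i)) [MeasurableSpace (Σ i, s i)] [BorelSpace (Σ i, s i)] :
    Measurable (sigmaEquiv s hs).symm := by
  refine measurable_of_isOpen fun U hU ↦ ?_
  have hpre : (sigmaEquiv s hs).symm ⁻¹' U = ⋃ i, (↑) '' (Sigma.mk i ⁻¹' U) := by
    ext x
    simp only [mem_preimage, mem_iUnion, mem_image]
    refine ⟨fun hx ↦ ⟨_, _, hx, (sigmaEquiv s hs).apply_symm_apply x⟩, ?_⟩
    rintro ⟨i, y, hy, rfl⟩
    rwa [← (sigmaEquiv s hs).symm_apply_apply ⟨i, y⟩] at hy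
  rw [hpre]
  exact .iUnion fun i ↦ (hmeas i).subtype_image (hU.preimage continuous_sigmaMk).measurableSet

/-- If a Hausdorff space `X` is a countable union of compact metrizable
subspaces, then there is an injective Borel map from `X` onto a σ-compact
metrizable space. -/
theorem stmt_5 {X : Type} [TopologicalSpace X] [T2Space X]
    (K : ℕ → Set X) (hcomp : ∀ n, IsCompact (K n))
    (hmet : ∀ n, TopologicalSpace.MetrizableSpace ↥(K n))
    (hcover : (⋃ n, K n) = Set.univ) :
    ∃ (Y : Type) (tY : TopologicalSpace Y),
      @TopologicalSpace.MetrizableSpace Y tY ∧ @SigmaCompactSpace Y tY ∧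
      ∃ F : X → Y,
        @Measurable X Y (borel X) (@borel Y tY) F ∧
        Function.Injective F ∧ Function.Surjective F := by
  set D := disjointed K
  have hpart := existsUnique_mem_disjointed hcover
  have (n : ℕ) : MetrizableSpace (D n) :=
    have := hmet n
    (IsEmbedding.inclusion (disjointed_subset K n)).metrizableSpace
  have (n : ℕ) : SigmaCompactSpace (D n) := by
    have := hmet n
    rw [show D n = _ from disjointed_eq_inter_compl K n]
    exact (hcomp n).sigmaCompactSpace_inter_of_isOpen
      ((finite_Iio n).isOpen_biInter fun m _ ↦ (hcomp m).isClosed.isOpen_compl)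
  let F := (sigmaEquiv D hpart).symm
  refine ⟨Σ n, D n, inferInstance, inferInstance, inferInstance, F, ?_, F.injective, F.surjective⟩
  borelize X (Σ n, D n)
  exact measurable_sigmaEquiv_symm hpart (.disjointed fun n ↦ (hcomp n).isClosed.measurableSet)
end

section
/- Let X be a separable metrizable space, E ⊆ X a countable dense subset, Y a second countable space, and ψ : C_p(X) → Y continuous (where C_p(X) carries the topology of pointwise convergence). Then there exists a countable set D with E ⊆ D ⊆ X and a continuous map ξ : C_D(X) → Y such that ψ = ξ ∘ (π_D restricted to C_p(X)), where C_D(X) = { f↾D : f ∈ C(X,ℝ) } ⊆ ℝ^D and π_D : ℝ^X → ℝ^D is the restriction map. -/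
open TopologicalSpace

/-- `C_p(X)`: continuous real functions with the topology of pointwise
convergence (subspace of `ℝ^X`). -/
def Cp (X : Type*) [TopologicalSpace X] : Type _ := {f : X → ℝ // Continuous f}

instance (X : Type*) [TopologicalSpace X] : TopologicalSpace (Cp X) :=
  instTopologicalSpaceSubtype

/-- `C_D(X) ⊆ ℝ^D`: restrictions to `D` of continuous real functions on `X`. -/
def CD (X : Type*) [TopologicalSpace X] (D : Set X) : Set (↥D → ℝ) :=
  {g | ∃ f : X → ℝ, Continuous f ∧ ∀ d : ↥D, g d = f ↑d}

/-!
As `X` is second countable, `C_p(X)` has a countable network and is therefore hereditarily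
Lindelöf. Hence for each of the countably many basic open sets `V ⊆ Y`, the open set `ψ⁻¹(V)` is
a countable union of cylinders with finite support; these supports together with `E` form `D`.
Restriction to the dense set `D` is injective on `C_p(X)`, and `ξ := ψ ∘ π_D⁻¹` is continuous
because each `ψ⁻¹(V)` is the preimage of an open subset of `ℝ^D`.
-/

open Set

section Network

variable {α : Type*} [TopologicalSpace α]

def IsNetwork (𝒩 : Set (Set α)) : Prop :=
  ∀ U, IsOpen U → ∀ x ∈ U, ∃ N ∈ 𝒩, x ∈ N ∧ N ⊆ U

theorem IsNetwork.hereditarilyLindelofSpace {𝒩 : Set (Set α)} (h𝒩 : IsNetwork 𝒩)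
    (h𝒩c : 𝒩.Countable) : HereditarilyLindelofSpace α := by
  refine ⟨fun s _ => isLindelof_of_countable_subcover fun {ι} U hU hsU => ?_⟩
  have : Countable {N // N ∈ 𝒩 ∧ ∃ i, N ⊆ U i} := (h𝒩c.mono (sep_subset _ _)).to_subtype
  choose i hi using fun N : {N // N ∈ 𝒩 ∧ ∃ i, N ⊆ U i} => N.2.2
  refine ⟨range i, countable_range i, fun x hx => ?_⟩
  obtain ⟨j, hxj⟩ := mem_iUnion.mp (hsU hx)
  obtain ⟨N, hN𝒩, hxN, hNU⟩ := h𝒩 (U j) (hU j) x hxj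
  exact mem_biUnion (mem_range_self ⟨N, hN𝒩, j, hNU⟩) (hi _ hxN)

end Network

section ContinuousFunctions

variable {X R : Type*} [TopologicalSpace X] [SecondCountableTopology X]
  [TopologicalSpace R] [SecondCountableTopology R] [RegularSpace R]

/-- The sets `{f | f(b) ⊆ closure c for all (b, c) ∈ s}`, with `s` a finite set of pairs of
basic open sets, form a countable network in the pointwise topology. -/
theorem exists_countable_isNetwork_continuous_subtype :
    ∃ 𝒩 : Set (Set {f : X → R // Continuous f}), 𝒩.Countable ∧ IsNetwork 𝒩 := by
  obtain ⟨𝒷X, h𝒷Xc, -, h𝒷X⟩ := TopologicalSpace.exists_countable_basis X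
  obtain ⟨𝒷R, h𝒷Rc, -, h𝒷R⟩ := TopologicalSpace.exists_countable_basis R
  refine ⟨(fun s => {f | ∀ p ∈ s, MapsTo f.1 p.1 (closure p.2)}) ''
      {s | s.Finite ∧ s ⊆ 𝒷X ×ˢ 𝒷R},
    (countable_ofPred_finite_subset (h𝒷Xc.prod h𝒷Rc)).image _, ?_⟩
  intro U hU f hfU
  obtain ⟨V, hV, rfl⟩ := isOpen_induced_iff.mp hU
  obtain ⟨I, u, hu, hIV⟩ := isOpen_pi_iff.mp hV f.1 hfU
  have hc : ∀ x ∈ I, ∃ c, (f.1 x ∈ c ∧ c ∈ 𝒷R) ∧ closure c ⊆ u x := fun x hx =>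
    (h𝒷R.nhds_basis_closure (f.1 x)).mem_iff.mp ((hu x hx).1.mem_nhds (hu x hx).2)
  choose! c hc hcu using hc
  have hb : ∀ x ∈ I, ∃ b ∈ 𝒷X, x ∈ b ∧ b ⊆ f.1 ⁻¹' c x := fun x hx =>
    h𝒷X.exists_subset_of_mem_open (hc x hx).1 ((h𝒷R.isOpen (hc x hx).2).preimage f.2)
  choose! b hb𝒷 hxb hbc using hb
  refine ⟨_, ⟨(fun x => (b x, c x)) '' I, ⟨I.finite_toSet.image _, ?_⟩, rfl⟩, ?_, ?_⟩
  · rintro _ ⟨x, hx, rfl⟩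
    exact ⟨hb𝒷 x hx, (hc x hx).2⟩
  · rintro _ ⟨x, hx, rfl⟩
    exact (mapsTo_iff_subset_preimage.mpr (hbc x hx)).mono_right subset_closure
  · intro g hg
    refine hIV fun x hx => hcu x hx ?_
    exact hg (b x, c x) ⟨x, hx, rfl⟩ (hxb x hx)

instance : HereditarilyLindelofSpace {f : X → R // Continuous f} :=
  have ⟨_, h𝒩c, h𝒩⟩ := exists_countable_isNetwork_continuous_subtype (X := X) (R := R)
  h𝒩.hereditarilyLindelofSpace h𝒩c

end ContinuousFunctions

section Coordinates

variable {ι : Type*} {R : ι → Type*}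

theorem pi_eq_domRestrict_preimage_pi {I J : Set ι} (hIJ : I ⊆ J) (u : ∀ i, Set (R i)) :
    I.pi u = J.domRestrict ⁻¹' (Subtype.val ⁻¹' I : Set J).pi (fun j => u j) := by
  ext f
  exact ⟨fun hf j hj => hf j hj, fun hf i hi => hf ⟨i, hIJ hi⟩ hi⟩

variable [∀ i, TopologicalSpace (R i)]

/-- Cover `U` by cylinders with finite support; hereditary Lindelöfness keeps countably many of
them, and `J` collects their supports. -/
theorem IsOpen.exists_countable_domRestrict_preimage {p : (∀ i, R i) → Prop}
    [HereditarilyLindelofSpace (Subtype p)] {U : Set (Subtype p)} (hU : IsOpen U) :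
    ∃ J : Set ι, J.Countable ∧ ∀ D, J ⊆ D →
      ∃ W : Set (∀ i : D, R i), IsOpen W ∧ U = (fun f => D.domRestrict f.1) ⁻¹' W := by
  have hcyl : ∀ f : U, ∃ (I : Finset ι) (u : ∀ i, Set (R i)),
      (∀ i ∈ I, IsOpen (u i) ∧ f.1.1 i ∈ u i) ∧ Subtype.val ⁻¹' (I : Set ι).pi u ⊆ U := by
    intro f
    obtain ⟨V, hV, rfl⟩ := isOpen_induced_iff.mp hU
    obtain ⟨I, u, hu, hIV⟩ := isOpen_pi_iff.mp hV f.1.1 f.2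
    exact ⟨I, u, hu, preimage_mono hIV⟩
  choose I u hu hIU using hcyl
  obtain ⟨t, htc, ht⟩ := eq_open_union_countable
    (fun f => (Subtype.val ⁻¹' (I f : Set ι).pi (u f) : Set (Subtype p)))
    fun f => (isOpen_set_pi (I f).finite_toSet fun i hi => (hu f i hi).1).preimage
      continuous_subtype_val
  have hcover : U = ⋃ f ∈ t, Subtype.val ⁻¹' (I f : Set ι).pi (u f) := by
    refine (ht.trans (Subset.antisymm (iUnion_subset hIU) fun f hf => ?_)).symm
    exact mem_iUnion.mpr ⟨⟨f, hf⟩, fun i hi => (hu ⟨f, hf⟩ i hi).2⟩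
  refine ⟨⋃ f ∈ t, I f, htc.biUnion fun f _ => (I f).countable_toSet, fun D hD => ?_⟩
  have hID : ∀ f ∈ t, (I f : Set ι) ⊆ D := fun f hf => (subset_biUnion_of_mem hf).trans hD
  refine ⟨⋃ f ∈ t, (Subtype.val ⁻¹' (I f : Set ι) : Set D).pi (fun j => u f j),
    isOpen_biUnion fun f _ => isOpen_set_pi ((I f).finite_toSet.preimage
      Subtype.val_injective.injOn) fun j hj => (hu f j hj).1, ?_⟩
  simp only [hcover, preimage_iUnion]
  refine iUnion₂_congr fun f hf => ?_
  rw [pi_eq_domRestrict_preimage_pi (hID f hf)]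
  rfl

end Coordinates

noncomputable def Cp.restrictEquiv {X : Type*} [TopologicalSpace X] {D : Set X}
    (hD : Dense D) : Cp X ≃ CD X D :=
  Equiv.ofBijective (fun f => ⟨fun d => f.1 d, f.1, f.2, fun _ => rfl⟩)
    ⟨fun f g hfg => Subtype.ext <| Continuous.ext_on hD f.2 g.2 fun x hx =>
        congrFun (congrArg Subtype.val hfg) ⟨x, hx⟩,
      fun ⟨_, f, hf, hgf⟩ => ⟨⟨f, hf⟩, Subtype.ext (funext fun d => (hgf d).symm)⟩⟩

theorem TopologicalSpace.IsTopologicalBasis.continuous_comp_equiv_symm {Z B Y : Type*}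
    [TopologicalSpace B] [TopologicalSpace Y] {b : Set (Set Y)} (hb : IsTopologicalBasis b)
    (ψ : Z → Y) (e : Z ≃ B) (h : ∀ V ∈ b, ∃ W, IsOpen W ∧ ψ ⁻¹' V = e ⁻¹' W) :
    Continuous (ψ ∘ e.symm) := by
  refine hb.continuous_iff.mpr fun V hV => ?_
  obtain ⟨W, hW, hψW⟩ := h V hV
  rw [preimage_comp, hψW, e.symm_preimage_preimage]
  exact hW

/-- Factorization: a continuous map `ψ : C_p(X) → Y` into a second countable
space factors through the restriction to some countable `D ⊇ E`. -/
theorem stmt_9 {X Y : Type} [TopologicalSpace X] [MetrizableSpace X]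
    [SeparableSpace X] [TopologicalSpace Y] [SecondCountableTopology Y]
    (E : Set X) (hEc : E.Countable) (hEd : Dense E)
    (ψ : Cp X → Y) (hψ : Continuous ψ) :
    ∃ D : Set X, D.Countable ∧ E ⊆ D ∧
      ∃ ξ : ↥(CD X D) → Y, Continuous ξ ∧
        ∀ f : Cp X, ψ f = ξ ⟨fun d => f.1 ↑d, ⟨f.1, f.2, fun _ => rfl⟩⟩ := by
  have : SecondCountableTopology X := by
    let := metrizableSpaceMetric X
    exact UniformSpace.secondCountable_of_separable X
  obtain ⟨b, hbc, -, hb⟩ := exists_countable_basis Y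
  choose! J hJc hJ using fun V (hV : V ∈ b) =>
    ((hb.isOpen hV).preimage hψ).exists_countable_domRestrict_preimage (p := Continuous)
  set D := E ∪ ⋃ V ∈ b, J V
  have hD : Dense D := hEd.mono subset_union_left
  refine ⟨D, hEc.union (hbc.biUnion hJc), subset_union_left, ψ ∘ (Cp.restrictEquiv hD).symm,
    hb.continuous_comp_equiv_symm ψ _ fun V hV => ?_, fun f => ?_⟩
  · obtain ⟨W, hW, hψW⟩ := hJ V hV D ((subset_biUnion_of_mem hV).trans subset_union_right)
    exact ⟨Subtype.val ⁻¹' W, hW.preimage continuous_subtype_val, hψW⟩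
  · exact congrArg ψ ((Cp.restrictEquiv hD).symm_apply_apply f).symm
end

section
/- (Kuratowski extension theorem) Let A be a subset of a Polish space P and φ : A → ℝ^ℕ a map that is Borel measurable with respect to the subspace Borel structure on A. Then there exists a Borel set B ⊆ P with A ⊆ B and a Borel-measurable map φ'' : B → ℝ^ℕ extending φ. -/
/-- Doob–Dynkin for the inclusion `A ↪ P`: the subspace σ-algebra is the pullback along
`Subtype.val`, so a measurable map on `A` factors measurably through `P`. -/
theorem Measurable.exists_measurable_extend_of_subtype {P Z : Type*} [MeasurableSpace P]
    [MeasurableSpace Z] [StandardBorelSpace Z] [Nonempty Z] {A : Set P} {φ : A → Z}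
    (hφ : Measurable φ) : ∃ ψ : P → Z, Measurable ψ ∧ ∀ a : A, ψ a = φ a := by
  obtain ⟨ψ, hψ, hφψ⟩ := hφ.exists_eq_measurable_comp
  exact ⟨ψ, hψ, fun a => (congrFun hφψ a).symm⟩

theorem stmt_16_general {P : Type} [MeasurableSpace P]
    (A : Set P) (φ : ↥A → (ℕ → ℝ)) (hφ : Measurable φ) :
    ∃ B : Set P, ∃ hAB : A ⊆ B, MeasurableSet B ∧
      ∃ φ'' : ↥B → (ℕ → ℝ), Measurable φ'' ∧
        ∀ (a : P) (ha : a ∈ A), φ'' ⟨a, hAB ha⟩ = φ ⟨a, ha⟩ := by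
  obtain ⟨ψ, hψ, hψφ⟩ := hφ.exists_measurable_extend_of_subtype
  exact ⟨Set.univ, Set.subset_univ A, MeasurableSet.univ, fun x => ψ x,
    hψ.comp measurable_subtype_coe, fun a ha => hψφ ⟨a, ha⟩⟩

/-- Kuratowski's extension theorem: a Borel map on an arbitrary subset `A` of a
Polish space `P` (with the relative Borel structure) extends to a Borel map on
some Borel set `B ⊇ A`. -/
theorem stmt_16 {P : Type} [TopologicalSpace P] [PolishSpace P]
    [MeasurableSpace P] [BorelSpace P]
    (A : Set P) (φ : ↥A → (ℕ → ℝ)) (hφ : Measurable φ) :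
    ∃ B : Set P, ∃ hAB : A ⊆ B, MeasurableSet B ∧
      ∃ φ'' : ↥B → (ℕ → ℝ), Measurable φ'' ∧
        ∀ (a : P) (ha : a ∈ A), φ'' ⟨a, hAB ha⟩ = φ ⟨a, ha⟩ :=
  stmt_16_general A φ hφ
end

section
/- The equality 𝔡 = 2^ℵ₀ (the dominating number equals the continuum) is equivalent to the statement: the intersection of fewer than continuum many Gδ subsets of ℝ, each containing ℚ, has cardinality 2^ℵ₀. -/
open Cardinal Filter

/-- The dominating number `𝔡`: the least cardinality of a family `D ⊆ ℕ^ℕ`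
such that every `g : ℕ → ℕ` is eventually dominated by some member of `D`. -/
noncomputable def dominatingNumber : Cardinal :=
  sInf {c : Cardinal | ∃ D : Set (ℕ → ℕ), #↥D = c ∧
    ∀ g : ℕ → ℕ, ∃ f ∈ D, ∀ᶠ n in atTop, g n ≤ f n}

/-!
Code `ℕ^ℕ` into `ℝ` by nested closed intervals with rational left endpoints, the `k`-th
child of an interval accumulating at that endpoint as `k → ∞`. An open set `U ⊇ ℚ` then
contains the point of every branch that exceeds, at some level, a bound `f_U : ℕ → ℕ`.
Fewer than `𝔡 = 𝔠` bounds do not dominate some `g` even everywhere, and the branches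
`g + z` give `𝔠` points in the intersection. Conversely, if `ℚ = {qₖ}` and `D` is
dominating with `#D < 𝔠`, the `Gδ` sets `⋂ₙ ⋃ₖ B(qₖ, 2^{-f (max k n)})`, `f ∈ D`,
contain `ℚ` and intersect in `ℚ`.
-/

open Set Topology

theorem mk_nat_fun_nat : #(ℕ → ℕ) = 𝔠 := by
  rw [← power_def, mk_nat, aleph0_power_aleph0]

def IsDominating (D : Set (ℕ → ℕ)) : Prop :=
  ∀ g : ℕ → ℕ, ∃ f ∈ D, ∀ᶠ n in atTop, g n ≤ f n

theorem isDominating_univ : IsDominating univ :=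
  fun g => ⟨g, mem_univ g, .of_forall fun _ => le_rfl⟩

theorem dominatingNumber_le_mk {D : Set (ℕ → ℕ)} (hD : IsDominating D) :
    dominatingNumber ≤ #D :=
  csInf_le' ⟨D, rfl, hD⟩

theorem dominatingNumber_le_continuum : dominatingNumber ≤ 𝔠 := by
  simpa [mk_nat_fun_nat] using dominatingNumber_le_mk isDominating_univ

theorem exists_isDominating_mk_eq_dominatingNumber :
    ∃ D : Set (ℕ → ℕ), IsDominating D ∧ #D = dominatingNumber := by
  obtain ⟨D, hD, hdom⟩ := csInf_mem (⟨_, univ, rfl, isDominating_univ⟩ :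
    {c : Cardinal | ∃ D : Set (ℕ → ℕ), #D = c ∧ IsDominating D}.Nonempty)
  exact ⟨D, hdom, hD⟩

theorem exists_forall_exists_lt_of_mk_lt_dominatingNumber {J : Type}
    (hJ : #J < dominatingNumber) (f : J → ℕ → ℕ) : ∃ g : ℕ → ℕ, ∀ j, ∃ n, f j n < g n := by
  by_contra! h
  have hdom : IsDominating (range f) := fun g =>
    let ⟨j, hj⟩ := h g
    ⟨f j, mem_range_self j, .of_forall hj⟩
  exact (dominatingNumber_le_mk hdom |>.trans mk_range_le).not_gt hJ

section SeqNhd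

variable {X : Type*} [MetricSpace X]

def seqNhd (q : ℕ → X) (f : ℕ → ℕ) : Set X :=
  ⋂ n, ⋃ k, Metric.ball (q k) ((2 : ℝ)⁻¹ ^ f (max k n))

theorem isGδ_seqNhd (q : ℕ → X) (f : ℕ → ℕ) : IsGδ (seqNhd q f) :=
  .iInter_of_isOpen fun _ => isOpen_iUnion fun _ => Metric.isOpen_ball

theorem range_subset_seqNhd (q : ℕ → X) (f : ℕ → ℕ) : range q ⊆ seqNhd q f := by
  rintro _ ⟨j, rfl⟩
  exact mem_iInter.2 fun n => mem_iUnion.2 ⟨j, Metric.mem_ball_self (by positivity)⟩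

theorem iInter_seqNhd_eq_range (q : ℕ → X) {D : Set (ℕ → ℕ)} (hD : IsDominating D) :
    ⋂ f : D, seqNhd q f = range q := by
  refine (subset_iInter fun f : D => range_subset_seqNhd q f).antisymm' fun x hx => ?_
  by_contra hxq
  have hdist : ∀ j, ∃ m : ℕ, (2 : ℝ)⁻¹ ^ m < dist x (q j) := fun j =>
    exists_pow_lt_of_lt_one (dist_pos.2 fun h => hxq ⟨j, h.symm⟩) (by norm_num)
  choose m hm using hdist
  -- dominating the running maximum of `m` controls every ball `q k` from stage `N` on
  obtain ⟨f, hfD, hf⟩ := hD fun k => (Finset.range (k + 1)).sup m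
  obtain ⟨N, hN⟩ := hf.exists_forall_of_atTop
  obtain ⟨k, hk⟩ := mem_iUnion.1 (mem_iInter.1 (mem_iInter.1 hx ⟨f, hfD⟩) N)
  have hmk : m k ≤ f (max k N) :=
    (Finset.le_sup (Finset.mem_range.2 (by omega))).trans (hN _ (le_max_right k N))
  have := (hm k).trans ((Metric.mem_ball.1 hk).trans_le
    (pow_le_pow_of_le_one (by norm_num) (by norm_num) hmk))
  exact this.false

end SeqNhd

namespace IntervalTree

open PiNat

/-- Left endpoint and width of the interval of a node of `ℕ^{<ℕ}`, a node being a list read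
right to left as in `PiNat.res`. -/
def node : List ℕ → ℚ × ℚ
  | [] => (0, 1)
  | k :: s => ((node s).1 + (node s).2 * 2⁻¹ ^ (k + 1), (node s).2 * 2⁻¹ ^ (k + 2))

def left (s : List ℕ) : ℝ := (node s).1

def width (s : List ℕ) : ℝ := (node s).2

def interval (s : List ℕ) : Set ℝ := Icc (left s) (left s + width s)

theorem left_mem_range_ratCast (s : List ℕ) : left s ∈ range ((↑) : ℚ → ℝ) :=
  ⟨(node s).1, rfl⟩

theorem left_cons (k : ℕ) (s : List ℕ) :
    left (k :: s) = left s + width s * 2⁻¹ ^ (k + 1) := by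
  simp [left, width, node]

theorem width_cons (k : ℕ) (s : List ℕ) : width (k :: s) = width s * 2⁻¹ ^ (k + 2) := by
  simp [width, node]

theorem width_pos : ∀ s, 0 < width s
  | [] => by simp [width, node]
  | k :: s => by rw [width_cons]; have := width_pos s; positivity

theorem left_mem_interval (s : List ℕ) : left s ∈ interval s :=
  ⟨le_rfl, le_add_of_nonneg_right (width_pos s).le⟩

theorem interval_cons_subset_Ico (k : ℕ) (s : List ℕ) :
    interval (k :: s) ⊆ Ico (left s) (left s + width s * 2⁻¹ ^ k) := by
  rintro y ⟨h₁, h₂⟩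
  rw [left_cons, width_cons] at *
  have hw := width_pos s
  have hk := pow_pos (by norm_num : (0 : ℝ) < 2⁻¹) k
  have h : (2 : ℝ)⁻¹ ^ (k + 1) + 2⁻¹ ^ (k + 2) < 2⁻¹ ^ k := by
    rw [pow_succ, pow_succ, pow_succ]; linarith
  constructor <;> nlinarith [pow_pos (by norm_num : (0 : ℝ) < 2⁻¹) (k + 1)]

theorem interval_cons_subset (k : ℕ) (s : List ℕ) : interval (k :: s) ⊆ interval s :=
  (interval_cons_subset_Ico k s).trans <| Ico_subset_Icc_self.trans <|
    Icc_subset_Icc_right <| by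
    have := width_pos s
    have : (2 : ℝ)⁻¹ ^ k ≤ 1 := pow_le_one₀ (by norm_num) (by norm_num)
    nlinarith

theorem disjoint_interval_cons {k k' : ℕ} (h : k ≠ k') (s : List ℕ) :
    Disjoint (interval (k :: s)) (interval (k' :: s)) := by
  wlog hlt : k < k' generalizing k k'
  · exact (this h.symm (by omega)).symm
  refine Set.disjoint_left.2 fun y hy hy' => ?_
  have h₁ := hy.1
  have h₂ := (interval_cons_subset_Ico k' s hy').2
  rw [left_cons] at h₁
  have : (2 : ℝ)⁻¹ ^ k' ≤ 2⁻¹ ^ (k + 1) := pow_le_pow_of_le_one (by norm_num) (by norm_num) hlt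
  nlinarith [width_pos s]

theorem eventually_interval_cons_subset (s : List ℕ) {U : Set ℝ} (hU : U ∈ 𝓝 (left s)) :
    ∀ᶠ k in atTop, interval (k :: s) ⊆ U := by
  obtain ⟨ε, hε, hball⟩ := Metric.mem_nhds_iff.1 hU
  have hlim : Tendsto (fun k => width s * (2 : ℝ)⁻¹ ^ k) atTop (𝓝 0) := by
    simpa using (tendsto_pow_atTop_nhds_zero_of_lt_one (r := (2 : ℝ)⁻¹) (by norm_num)
      (by norm_num)).const_mul (width s)
  filter_upwards [hlim.eventually (gt_mem_nhds hε)] with k hk y hy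
  obtain ⟨h₁, h₂⟩ := interval_cons_subset_Ico k s hy
  exact hball (by rw [Metric.mem_ball, Real.dist_eq, abs_of_nonneg (by linarith)]; linarith)

noncomputable def point (a : ℕ → ℕ) : ℝ := ⨆ n, left (res a n)

theorem point_mem_interval (a : ℕ → ℕ) (n : ℕ) : point a ∈ interval (res a n) := by
  have hanti : Antitone fun n => interval (res a n) :=
    antitone_nat_of_succ_le fun n => interval_cons_subset (a n) (res a n)
  exact mem_iInter.1 (ciSup_mem_iInter_Icc_of_antitone_Icc hanti
    fun n => (left_mem_interval (res a n)).2) n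

theorem point_injective : Function.Injective point := by
  intro a b hab
  refine res_injective (funext fun n => ?_)
  induction n with
  | zero => rfl
  | succ n ih =>
    have hb := point_mem_interval b (n + 1)
    rw [res_succ, ← ih, ← hab] at hb
    have heq : a n = b n := by
      by_contra hne
      exact Set.disjoint_left.1 (disjoint_interval_cons hne _) (point_mem_interval a (n + 1)) hb
    rw [res_succ, res_succ, ih, heq]

theorem finite_setOf_length_not_interval_subset {U : Set ℝ} {N : List ℕ → ℕ}
    (hN : ∀ s k, N s ≤ k → interval (k :: s) ⊆ U) (n : ℕ) :
    {s | s.length = n ∧ ¬ interval s ⊆ U}.Finite := by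
  induction n with
  | zero =>
    refine (finite_singleton []).subset fun s hs => ?_
    simp [List.length_eq_zero_iff.1 hs.1]
  | succ n ih =>
    refine (ih.biUnion fun t _ => (finite_Iio (N t)).image (· :: t)).subset ?_
    rintro (_ | ⟨k, t⟩) ⟨hlen, hU⟩
    · simp at hlen
    · have ht : ¬ interval t ⊆ U := fun ht => hU ((interval_cons_subset k t).trans ht)
      exact mem_biUnion (x := t) ⟨by simpa using hlen, ht⟩
        ⟨k, not_le.1 fun hk => hU (hN t k hk), rfl⟩

theorem exists_bound_point_mem {U : Set ℝ} (hU : IsOpen U) (hQ : range ((↑) : ℚ → ℝ) ⊆ U) :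
    ∃ f : ℕ → ℕ, ∀ a : ℕ → ℕ, (∃ n, f n < a n) → point a ∈ U := by
  have hN : ∀ s, ∃ N, ∀ k, N ≤ k → interval (k :: s) ⊆ U := fun s =>
    eventually_atTop.1 <|
      eventually_interval_cons_subset s (hU.mem_nhds (hQ (left_mem_range_ratCast s)))
  choose N hN using hN
  choose f hf using fun n => ((finite_setOf_length_not_interval_subset hN n).image N).bddAbove
  refine ⟨f, fun a ⟨n, hn⟩ => ?_⟩
  by_cases h : interval (res a n) ⊆ U
  · exact h (point_mem_interval a n)
  · have : N (res a n) ≤ f n := hf n ⟨res a n, ⟨res_length a n, h⟩, rfl⟩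
    exact hN _ (a n) (by omega) (point_mem_interval a (n + 1))

end IntervalTree

theorem continuum_le_mk_iInter {J : Type} (U : J → Set ℝ) (hU : ∀ j, IsOpen (U j))
    (hQ : ∀ j, range ((↑) : ℚ → ℝ) ⊆ U j) (hJ : #J < dominatingNumber) :
    𝔠 ≤ #(⋂ j, U j) := by
  choose f hf using fun j => IntervalTree.exists_bound_point_mem (hU j) (hQ j)
  obtain ⟨g, hg⟩ := exists_forall_exists_lt_of_mk_lt_dominatingNumber hJ f
  have hmem : ∀ z, IntervalTree.point (g + z) ∈ ⋂ j, U j := fun z =>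
    mem_iInter.2 fun j => hf j _ ((hg j).imp fun n hn => hn.trans_le (Nat.le_add_right _ _))
  rw [← mk_nat_fun_nat]
  exact mk_le_of_injective (f := fun z => ⟨_, hmem z⟩) fun z z' h =>
    add_left_cancel (IntervalTree.point_injective (congrArg Subtype.val h))

/-- `𝔡 = 2^ℵ₀` is equivalent to: any intersection of fewer than continuum many
`Gδ` subsets of `ℝ`, each containing `ℚ`, has cardinality continuum. -/
theorem stmt_18 :
    dominatingNumber = Cardinal.continuum ↔
      ∀ (ι : Type) (A : ι → Set ℝ), #ι < Cardinal.continuum →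
        (∀ i, IsGδ (A i)) → (∀ i, Set.range ((↑) : ℚ → ℝ) ⊆ A i) →
        #↥(⋂ i, A i) = Cardinal.continuum := by
  constructor
  · intro h ι A hι hA hQ
    choose U hUo hUeq using fun i => (hA i).eq_iInter_nat
    have hQU : ∀ p : ι × ℕ, range ((↑) : ℚ → ℝ) ⊆ U p.1 p.2 := fun p =>
      (hQ p.1).trans ((hUeq p.1).trans_subset (iInter_subset _ p.2))
    have hsmall : #(ι × ℕ) < dominatingNumber := by
      rw [h, mk_prod, lift_id, lift_id, mk_nat]
      exact mul_lt_of_lt aleph0_le_continuum hι aleph0_lt_continuum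
    have hsub : ⋂ p : ι × ℕ, U p.1 p.2 ⊆ ⋂ i, A i := subset_iInter fun i =>
      (hUeq i).symm ▸ subset_iInter fun n => iInter_subset _ (i, n)
    exact ((mk_set_le _).trans_eq mk_real).antisymm
      ((continuum_le_mk_iInter _ (fun p => hUo p.1 p.2) hQU hsmall).trans (mk_le_mk_of_subset hsub))
  · intro h
    refine dominatingNumber_le_continuum.antisymm (not_lt.1 fun hlt => ?_)
    obtain ⟨D, hD, hDcard⟩ := exists_isDominating_mk_eq_dominatingNumber
    obtain ⟨q, hq⟩ := (countable_range ((↑) : ℚ → ℝ)).exists_eq_range (range_nonempty _)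
    have := h D (fun f => seqNhd q f) (hDcard ▸ hlt) (fun f => isGδ_seqNhd q f)
      fun f => hq ▸ range_subset_seqNhd q f
    rw [iInter_seqNhd_eq_range q hD] at this
    exact ((countable_range q).le_aleph0.trans_lt aleph0_lt_continuum).ne this
end
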